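/- There exists a 10×10 integer matrix S with |det S| = 20 such that Sᵀ · G(U⊕E_8) · S = G(D_5) ⊕ G(A_4) ⊕ ⟨20⟩. In other words, the lattice D_5 ⊕ A_4 ⊕ ⟨20⟩ embeds as a sublattice of index 20 in the even unimodular lattice U ⊕ E_8 of signature (1,9); i.e., D_5 ⊕ A_4 and a vector h of square 20 glue to U ⊕ E_8. -/

import Mathlib

/-- The Gram matrix of the negative-definite root lattice `Aₙ` (0-based indexing:
`i : Fin n` is the vertex `a_{i+1}`): diagonal entries `-2`, entries `1` at
adjacent positions, `0` elsewhere. -/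
def gramA (n : ℕ) : Matrix (Fin n) (Fin n) ℤ :=
  Matrix.of fun i j =>
    if i = j then -2
    else if i.val + 1 = j.val ∨ j.val + 1 = i.val then 1
    else 0

/-- The Gram matrix of the negative-definite root lattice `D_k` (0-based indexing:
`i : Fin k` is the vertex `d_{i+1}`): diagonal entries `-2`, entries `1` at the
edges `{i, i+1}` (1-based, `1 ≤ i ≤ k-2`) and `{k-2, k}` (1-based), `0` elsewhere. -/
def gramD (k : ℕ) : Matrix (Fin k) (Fin k) ℤ :=
  Matrix.of fun i j =>
    if i = j then -2
    else if (i.val + 1 = j.val ∧ j.val + 1 ≤ k - 1) ∨ (j.val + 1 = i.val ∧ i.val + 1 ≤ k - 1) ∨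
        (i.val = k - 3 ∧ j.val = k - 1) ∨ (j.val = k - 3 ∧ i.val = k - 1) then 1
    else 0

/-- The Gram matrix of the negative-definite root lattice `E_l`, `l ∈ {6,7,8}`
(0-based indexing: `i : Fin l` is the vertex `e_{i+1}`): diagonal entries `-2`,
entries `1` at the edges `{i, i+1}` (1-based, `2 ≤ i ≤ l-1`) and `{1, 4}`
(1-based), `0` elsewhere. -/
def gramE (l : ℕ) : Matrix (Fin l) (Fin l) ℤ :=
  Matrix.of fun i j =>
    if i = j then -2
    else if (i.val + 1 = j.val ∧ 1 ≤ i.val) ∨ (j.val + 1 = i.val ∧ 1 ≤ j.val) ∨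
        (i.val = 0 ∧ j.val = 3) ∨ (j.val = 0 ∧ i.val = 3) then 1
    else 0

/-- Block-diagonal (orthogonal) sum of two Gram matrices. -/
def blockSum {m n : ℕ} (A : Matrix (Fin m) (Fin m) ℤ) (B : Matrix (Fin n) (Fin n) ℤ) :
    Matrix (Fin (m + n)) (Fin (m + n)) ℤ :=
  Matrix.reindex finSumFinEquiv finSumFinEquiv (Matrix.fromBlocks A 0 0 B)

/-- The Gram matrix of the hyperbolic plane `U`. -/
def gramU : Matrix (Fin 2) (Fin 2) ℤ := !![0, 1; 1, 0]

/-- The Gram matrix of the even unimodular lattice `U ⊕ E₈` of signature `(1,9)`. -/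
def gramUE8 : Matrix (Fin 10) (Fin 10) ℤ := blockSum gramU (gramE 8)

/-!
The first nine columns of `glueEmbedding` are roots of `U ⊕ E₈` forming simple root bases of a
`D₅` and of an `A₄`, and its last column is a vector of square `20` orthogonal to both. The index
is certified without expanding a `10 × 10` determinant: `rowReduction`, which is invertible over
`ℤ`, makes `rowReduction * glueEmbedding` upper triangular with diagonal product `-20`.
-/

theorem Matrix.abs_det_eq_abs_prod_diag_of_isUpperTriangular_mul {n : Type*} [Fintype n]
    [LinearOrder n] {A U V : Matrix n n ℤ} (hUV : U * V = 1)
    (hUA : (U * A).IsUpperTriangular) : |A.det| = |∏ i, (U * A) i i| := by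
  have hU : |U.det| = 1 := by
    have : U.det * V.det = 1 := by rw [← det_mul, hUV, det_one]
    exact Int.isUnit_iff_abs_eq.mp (IsUnit.of_mul_eq_one _ this)
  rw [← det_of_isUpperTriangular hUA, det_mul, abs_mul, hU, one_mul]

def glueEmbedding : Matrix (Fin 10) (Fin 10) ℤ :=
  !![0, 0, 0, 0, 0, 0, 0, 0, 1, -4;
     0, 0, 1, -1, 0, 0, 0, 0, 0, -5;
     -1, 2, 0, 1, -3, 1, 0, -1, 0, 2;
     0, 1, 0, 1, -2, 0, 1, -1, 0, 1;
     -1, 2, 0, 2, -4, 0, 1, -2, 0, 4;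
     -2, 4, 0, 2, -6, 0, 1, -2, 0, 4;
     -1, 3, 0, 2, -5, 0, 0, -1, 0, 3;
     -1, 2, 0, 2, -4, 0, 0, 0, -1, 4;
     0, 1, 0, 1, -3, 0, 0, 0, -1, 4;
     0, 0, 1, 0, -2, 0, 0, 0, 0, 0]

def rowReduction : Matrix (Fin 10) (Fin 10) ℤ :=
  !![0, 0, 1, 0, 0, 0, 0, 0, 0, 0;
     0, 0, 0, 1, 0, 0, 0, 0, 0, 0;
     0, 1, 0, 0, 0, 0, 0, 0, 0, 0;
     0, 0, -1, 0, 1, 0, 0, 0, 0, 0;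
     0, 0, 0, -1, 0, 0, 0, 0, 1, 0;
     0, 0, -1, -1, 0, 0, 1, 0, 0, 0;
     0, 0, 0, 0, -1, 0, 0, 1, 0, 0;
     0, -1, 0, 0, 0, 0, 1, -1, -1, 1;
     1, 0, 0, 0, 0, 0, 0, 0, 0, 0;
     -5, -4, 0, 2, -3, 1, 2, -1, -4, 4]

def rowReductionInv : Matrix (Fin 10) (Fin 10) ℤ :=
  !![0, 0, 0, 0, 0, 0, 0, 0, 1, 0;
     0, 0, 1, 0, 0, 0, 0, 0, 0, 0;
     1, 0, 0, 0, 0, 0, 0, 0, 0, 0;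
     0, 1, 0, 0, 0, 0, 0, 0, 0, 0;
     1, 0, 0, 1, 0, 0, 0, 0, 0, 0;
     2, 0, 0, 0, 0, 2, -3, -4, 5, 1;
     1, 1, 0, 0, 0, 1, 0, 0, 0, 0;
     1, 0, 0, 1, 0, 0, 1, 0, 0, 0;
     0, 1, 0, 0, 1, 0, 0, 0, 0, 0;
     0, 0, 1, 1, 1, -1, 1, 1, 0, 0]

theorem rowReduction_mul_inv : rowReduction * rowReductionInv = 1 := by
  decide

theorem rowReduction_mul_glueEmbedding_isUpperTriangular :
    (rowReduction * glueEmbedding).IsUpperTriangular := fun i j (h : j < i) => by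
  revert i j h; decide

theorem prod_diag_rowReduction_mul_glueEmbedding :
    ∏ i, (rowReduction * glueEmbedding) i i = -20 := by
  decide

theorem abs_det_glueEmbedding : |glueEmbedding.det| = 20 := by
  rw [Matrix.abs_det_eq_abs_prod_diag_of_isUpperTriangular_mul rowReduction_mul_inv
    rowReduction_mul_glueEmbedding_isUpperTriangular, prod_diag_rowReduction_mul_glueEmbedding]
  rfl

theorem glueEmbedding_gram :
    glueEmbedding.transpose * gramUE8 * glueEmbedding =
      blockSum (blockSum (gramD 5) (gramA 4)) !![(20 : ℤ)] := by
  decide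

/-- The lattice `D₅ ⊕ A₄ ⊕ ⟨20⟩` embeds with index `20` into `U ⊕ E₈`: `D₅ ⊕ A₄` and a vector of square `20` glue to `U ⊕ E₈`. -/
theorem glue_15 :
    ∃ S : Matrix (Fin 10) (Fin 10) ℤ,
      |S.det| = 20 ∧ S.transpose * gramUE8 * S = blockSum (blockSum (gramD 5) (gramA 4)) !![(20 : ℤ)] :=
  ⟨glueEmbedding, abs_det_glueEmbedding, glueEmbedding_gram⟩
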